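/- Let f : (0,1) → ℝ be a nondecreasing step function with finitely many values, and 0 ≤ u < v < 1. Then for every ε ∈ (0, v−u), 0 ≤ (pr_f h^u_ε, pr_f h^v_ε)_{L²} ≤ 1/(v−u−ε), where h^u_ε = ε⁻¹𝟙_{[u,u+ε)} and h^v_ε = ε⁻¹𝟙_{[v,v+ε)}. -/

import Mathlib

/-!
The level sets of a monotone `f` are intervals. At a point `w`, `pr_f h^u_ε (w)` vanishes unless
the level set through `w` meets `[u, u + ε)`, and likewise for `v`; so the product of the two
projections lives on a single level set `S`, one containing `[u + ε, v]`, whose length is at least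
`v - u - ε`. On `S` both projections are averages of `h^u_ε` and `h^v_ε` over `S`, each at most
`1 / |S|`, so the inner product is at most `|S| · |S|⁻² ≤ 1 / (v - u - ε)`.
-/

open MeasureTheory Set Filter

noncomputable section

/-- The level set of `f` through `w`, inside `(0,1)`. -/
def levelSet (f : ℝ → ℝ) (w : ℝ) : Set ℝ := {r ∈ Set.Ioo (0:ℝ) 1 | f r = f w}

open Classical in
/-- The orthogonal projection `pr_f h` onto `σ(f)`-measurable functions, given by
averaging `h` over the level intervals of `f` (for step functions `f`). -/
def projFun (f h : ℝ → ℝ) (w : ℝ) : ℝ :=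
  if 0 < volume (levelSet f w) then
    (∫ r in levelSet f w, h r) / (volume (levelSet f w)).toReal
  else h w

/-- The normalized indicator kernel `h^u_ε = ε⁻¹ 𝟙_{[u,u+ε)}`. -/
def hker (u ε : ℝ) : ℝ → ℝ := fun w =>
  Set.indicator (Set.Ico u (u + ε)) (fun _ => 1 / ε) w

section LevelSet

variable {f : ℝ → ℝ}

lemma levelSet_subset_Ioo (c : ℝ) : levelSet f c ⊆ Ioo 0 1 := fun _ hr => hr.1

lemma self_mem_levelSet {w : ℝ} (hw : w ∈ Ioo (0 : ℝ) 1) : w ∈ levelSet f w := ⟨hw, rfl⟩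

lemma levelSet_eq_of_mem {c w : ℝ} (hw : w ∈ levelSet f c) : levelSet f w = levelSet f c := by
  ext r
  simp only [levelSet, hw.2]

lemma levelSet_ordConnected (hf : MonotoneOn f (Ioo 0 1)) (c : ℝ) :
    (levelSet f c).OrdConnected := by
  refine ⟨fun x ⟨hx, hfx⟩ y ⟨hy, hfy⟩ z hz => ?_⟩
  have hz' : z ∈ Ioo (0 : ℝ) 1 := ⟨hx.1.trans_le hz.1, hz.2.trans_lt hy.2⟩
  exact ⟨hz', le_antisymm (hfy ▸ hf hz' hy hz.2) (hfx ▸ hf hx hz' hz.1)⟩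

lemma projFun_nonneg {h : ℝ → ℝ} (hh : 0 ≤ h) (w : ℝ) : 0 ≤ projFun f h w := by
  unfold projFun
  split_ifs
  · exact div_nonneg (integral_nonneg hh) ENNReal.toReal_nonneg
  · exact hh w

lemma projFun_of_mem_levelSet {h : ℝ → ℝ} {c w : ℝ} (hw : w ∈ levelSet f c)
    (hc : 0 < volume (levelSet f c)) :
    projFun f h w = (∫ r in levelSet f c, h r) / volume.real (levelSet f c) := by
  rw [projFun, levelSet_eq_of_mem hw, if_pos hc, measureReal_def]

end LevelSet

lemma inter_support_nonempty_of_setIntegral_ne_zero {α E : Type*} [MeasurableSpace α]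
    [NormedAddCommGroup E] [NormedSpace ℝ E] {μ : Measure α} {s : Set α} {h : α → E}
    (hint : ∫ x in s, h x ∂μ ≠ 0) : (s ∩ Function.support h).Nonempty := by
  by_contra hempty
  refine hint (setIntegral_eq_zero_of_forall_eq_zero fun x hx => ?_)
  by_contra hx'
  exact hempty ⟨x, hx, hx'⟩

lemma Set.OrdConnected.Icc_subset_of_inter_nonempty {α : Type*} [LinearOrder α] {S : Set α}
    (hS : S.OrdConnected) {p q : α} (hp : (S ∩ Iio p).Nonempty) (hq : (S ∩ Ici q).Nonempty) :
    Icc p q ⊆ S := by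
  obtain ⟨a, haS, ha⟩ := hp
  obtain ⟨b, hbS, hb⟩ := hq
  exact (Icc_subset_Icc (le_of_lt ha) hb).trans (hS.out haS hbS)

section Projection

variable {f h g : ℝ → ℝ} {p q : ℝ}

lemma levelSet_inter_support_nonempty_of_projFun_ne_zero {w : ℝ} (hw : w ∈ Ioo (0 : ℝ) 1)
    (hproj : projFun f h w ≠ 0) : (levelSet f w ∩ Function.support h).Nonempty := by
  unfold projFun at hproj
  split_ifs at hproj
  · exact inter_support_nonempty_of_setIntegral_ne_zero (div_ne_zero_iff.mp hproj).1
  · exact ⟨w, self_mem_levelSet hw, hproj⟩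

lemma mem_levelSet_of_projFun_mul_ne_zero (hf : MonotoneOn f (Ioo 0 1))
    (hsh : Function.support h ⊆ Iio p) (hsg : Function.support g ⊆ Ici q) {c w : ℝ}
    (hc : c ∈ Icc p q) (hw : w ∈ Ioo (0 : ℝ) 1) (hne : projFun f h w * projFun f g w ≠ 0) :
    w ∈ levelSet f c := by
  obtain ⟨hh, hg⟩ := mul_ne_zero_iff.mp hne
  have hsub : Icc p q ⊆ levelSet f w :=
    (levelSet_ordConnected hf w).Icc_subset_of_inter_nonempty
      ((levelSet_inter_support_nonempty_of_projFun_ne_zero hw hh).mono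
        (inter_subset_inter_right _ hsh))
      ((levelSet_inter_support_nonempty_of_projFun_ne_zero hw hg).mono
        (inter_subset_inter_right _ hsg))
  exact ⟨hw, (hsub hc).2.symm⟩

end Projection

section Integral

variable {f h g : ℝ → ℝ} {p q : ℝ}

lemma volume_levelSet_ne_top (c : ℝ) : volume (levelSet f c) ≠ ⊤ :=
  ((measure_mono (levelSet_subset_Ioo c)).trans_lt measure_Ioo_lt_top).ne

lemma setIntegral_projFun_mul_eq_setIntegral_levelSet (hf : MonotoneOn f (Ioo 0 1))
    (hsh : Function.support h ⊆ Iio p) (hsg : Function.support g ⊆ Ici q) {c : ℝ}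
    (hc : c ∈ Icc p q) :
    ∫ w in Ioo 0 1, projFun f h w * projFun f g w =
      ∫ w in levelSet f c, projFun f h w * projFun f g w :=
  setIntegral_eq_of_subset_of_forall_sdiff_eq_zero measurableSet_Ioo (levelSet_subset_Ioo c)
    fun _ hw => by_contra fun hne =>
      hw.2 (mem_levelSet_of_projFun_mul_ne_zero hf hsh hsg hc hw.1 hne)

lemma setIntegral_levelSet_projFun_mul (hf : MonotoneOn f (Ioo 0 1)) {c : ℝ}
    (hc : 0 < volume (levelSet f c)) :
    ∫ w in levelSet f c, projFun f h w * projFun f g w =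
      (∫ r in levelSet f c, h r) * (∫ r in levelSet f c, g r) / volume.real (levelSet f c) := by
  have hpos : 0 < volume.real (levelSet f c) :=
    ENNReal.toReal_pos hc.ne' (volume_levelSet_ne_top c)
  rw [setIntegral_congr_fun (levelSet_ordConnected hf c).measurableSet fun _ hw => by
    rw [projFun_of_mem_levelSet hw hc, projFun_of_mem_levelSet hw hc], setIntegral_const,
    smul_eq_mul]
  field_simp

lemma setIntegral_levelSet_projFun_mul_le (hf : MonotoneOn f (Ioo 0 1)) (hg0 : 0 ≤ g)
    (hh1 : ∀ s, ∫ x in s, h x ≤ 1) (hg1 : ∀ s, ∫ x in s, g x ≤ 1)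
    (hsh : Function.support h ⊆ Iio p) (hsg : Function.support g ⊆ Ici q) (hpq : p < q)
    (c : ℝ) : ∫ w in levelSet f c, projFun f h w * projFun f g w ≤ 1 / (q - p) := by
  have hqp : 0 < q - p := sub_pos.2 hpq
  rcases eq_zero_or_pos (volume (levelSet f c)) with hc | hc
  · rw [setIntegral_measure_zero _ hc]
    positivity
  rw [setIntegral_levelSet_projFun_mul hf hc]
  set S := levelSet f c
  rcases eq_or_ne ((∫ r in S, h r) * ∫ r in S, g r) 0 with h0 | h0
  · rw [h0, zero_div]
    positivity
  obtain ⟨hIh, hIg⟩ := mul_ne_zero_iff.mp h0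
  have hlen : q - p ≤ volume.real S := by
    have hIcc : Icc p q ⊆ S := (levelSet_ordConnected hf c).Icc_subset_of_inter_nonempty
      ((inter_support_nonempty_of_setIntegral_ne_zero hIh).mono (inter_subset_inter_right _ hsh))
      ((inter_support_nonempty_of_setIntegral_ne_zero hIg).mono (inter_subset_inter_right _ hsg))
    simpa [Real.volume_real_Icc, hqp.le] using measureReal_mono hIcc (volume_levelSet_ne_top c)
  calc (∫ r in S, h r) * (∫ r in S, g r) / volume.real S ≤ 1 / volume.real S := by
        gcongr
        exact mul_le_one₀ (hh1 S) (integral_nonneg hg0) (hg1 S)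
    _ ≤ 1 / (q - p) := one_div_le_one_div_of_le hqp hlen

theorem setIntegral_projFun_mul_nonneg_and_le (hf : MonotoneOn f (Ioo 0 1)) (hh0 : 0 ≤ h)
    (hg0 : 0 ≤ g) (hh1 : ∀ s, ∫ x in s, h x ≤ 1) (hg1 : ∀ s, ∫ x in s, g x ≤ 1)
    (hsh : Function.support h ⊆ Iio p) (hsg : Function.support g ⊆ Ici q) (hpq : p < q) :
    0 ≤ ∫ w in Ioo 0 1, projFun f h w * projFun f g w ∧
      ∫ w in Ioo 0 1, projFun f h w * projFun f g w ≤ 1 / (q - p) := by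
  refine ⟨integral_nonneg fun w => mul_nonneg (projFun_nonneg hh0 w) (projFun_nonneg hg0 w), ?_⟩
  rw [setIntegral_projFun_mul_eq_setIntegral_levelSet hf hsh hsg (left_mem_Icc.2 hpq.le)]
  exact setIntegral_levelSet_projFun_mul_le hf hg0 hh1 hg1 hsh hsg hpq p

end Integral

section Kernel

variable {u ε : ℝ}

lemma hker_nonneg (hε : 0 < ε) : 0 ≤ hker u ε :=
  fun _ => indicator_nonneg (fun _ _ => by positivity) _

lemma support_hker_subset : Function.support (hker u ε) ⊆ Ico u (u + ε) :=
  support_indicator_subset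

lemma setIntegral_hker_le_one (hε : 0 < ε) (s : Set ℝ) : ∫ x in s, hker u ε x ≤ 1 := by
  have hle : volume.real (s ∩ Ico u (u + ε)) ≤ ε := by
    simpa [Real.volume_real_Ico, hε.le] using
      measureReal_mono (μ := volume) (s₁ := s ∩ Ico u (u + ε)) inter_subset_right
        measure_Ico_lt_top.ne
  calc ∫ x in s, hker u ε x = volume.real (s ∩ Ico u (u + ε)) * (1 / ε) := by
        rw [show hker u ε = (Ico u (u + ε)).indicator fun _ => 1 / ε from rfl,
          setIntegral_indicator measurableSet_Ico, setIntegral_const, smul_eq_mul]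
    _ ≤ ε * (1 / ε) := by gcongr
    _ = 1 := by field_simp

end Kernel

theorem stmt10_general (f : ℝ → ℝ)
    (hmono : MonotoneOn f (Set.Icc (0:ℝ) 1))
    (u v : ℝ)
    (ε : ℝ) (hε : ε ∈ Set.Ioo 0 (v - u)) :
    0 ≤ ∫ w in Set.Ioo (0:ℝ) 1, projFun f (hker u ε) w * projFun f (hker v ε) w ∧
    (∫ w in Set.Ioo (0:ℝ) 1, projFun f (hker u ε) w * projFun f (hker v ε) w) ≤
      1 / (v - u - ε) := by
  obtain ⟨hε0, hεvu⟩ := hε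
  rw [sub_sub]
  exact setIntegral_projFun_mul_nonneg_and_le (hmono.mono Ioo_subset_Icc_self) (hker_nonneg hε0)
    (hker_nonneg hε0) (setIntegral_hker_le_one hε0) (setIntegral_hker_le_one hε0)
    (support_hker_subset.trans Ico_subset_Iio_self) (support_hker_subset.trans Ico_subset_Ici_self)
    (by linarith)

/-- for a nondecreasing step function `f` with finitely many values and
`0 ≤ u < v < 1`, for every `ε ∈ (0, v − u)`,
`0 ≤ (pr_f h^u_ε, pr_f h^v_ε)_{L²} ≤ 1/(v − u − ε)`. -/
theorem stmt10 (f : ℝ → ℝ)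
    (hmono : MonotoneOn f (Set.Icc (0:ℝ) 1))
    (hright : ∀ u ∈ Set.Ico (0:ℝ) 1, ContinuousWithinAt f (Set.Ici u) u)
    (hfin : (f '' Set.Icc (0:ℝ) 1).Finite)
    (u v : ℝ) (hu : 0 ≤ u) (huv : u < v) (hv : v < 1)
    (ε : ℝ) (hε : ε ∈ Set.Ioo 0 (v - u)) :
    0 ≤ ∫ w in Set.Ioo (0:ℝ) 1, projFun f (hker u ε) w * projFun f (hker v ε) w ∧
    (∫ w in Set.Ioo (0:ℝ) 1, projFun f (hker u ε) w * projFun f (hker v ε) w) ≤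
      1 / (v - u - ε) :=
  stmt10_general f hmono u v ε hε
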